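/- In a ℤⁿ-quiver Q, any two neighbors v₁ and v₂ are weakly neighbors, and the only bridges of v₁ and v₂ are v₁ and v₂ themselves. In particular, the set of bridges of all pairs of distinct vertices of a polygon is the polygon itself. -/
import Mathlib


/- Background definitions: ℤⁿ-quivers, linked nets, and associated notions,
following Esteves–Santos–Vital, "Quiver representations arising from
degenerations of linear series, II". -/

open CategoryTheory CategoryTheory.Limits

namespace LNet
universe w

section QuiverDefs

variable {V : Type*} [Quiver.{w+1} V] {n : ℕ}

/-- The number of arrows of type `t` occurring in the path `p`. -/
def typeCount (τ : ∀ {a b : V}, (a ⟶ b) → Fin (n + 1)) :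
    ∀ {a b : V}, Quiver.Path a b → Fin (n + 1) → ℕ
  | _, _, Quiver.Path.nil, _ => 0
  | _, _, Quiver.Path.cons p e, t => typeCount τ p t + (if τ e = t then 1 else 0)

variable (τ : ∀ {a b : V}, (a ⟶ b) → Fin (n + 1))

/-- A path is admissible if it contains no arrow of at least one arrow type. -/
def Admissible {a b : V} (p : Quiver.Path a b) : Prop :=
  ∃ t : Fin (n + 1), typeCount τ p t = 0

/-- A path is simple if it contains at most one arrow of each type. -/
def SimplePath {a b : V} (p : Quiver.Path a b) : Prop :=
  ∀ t : Fin (n + 1), typeCount τ p t ≤ 1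

/-- Two paths with the same source have no arrow type in common. -/
def NoCommonType {a b c : V} (p : Quiver.Path a b) (q : Quiver.Path a c) : Prop :=
  ∀ t : Fin (n + 1), ¬(typeCount τ p t ≠ 0 ∧ typeCount τ q t ≠ 0)

/-- The quiver is a `ℤⁿ`-quiver with respect to the partition of its arrow set
into the `n + 1` types given by `τ`. -/
structure IsZnQuiver : Prop where
  uniqArrow : ∀ (a : V) (t : Fin (n + 1)), ∃! e : Σ b : V, a ⟶ b, τ e.2 = t
  connAdm : ∀ a b : V, ∃ p : Quiver.Path a b, Admissible τ p
  targetEq : ∀ {a b c : V} (p : Quiver.Path a b) (q : Quiver.Path a c),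
      b = c ↔ ∃ d : ℤ, ∀ t : Fin (n + 1),
        (typeCount τ p t : ℤ) - (typeCount τ q t : ℤ) = d

/-- `b = I · a`: there is a simple path from `a` to `b` with essential type `I`. -/
def StepBy (I : Set (Fin (n + 1))) (a b : V) : Prop :=
  ∃ p : Quiver.Path a b, SimplePath τ p ∧ ∀ t : Fin (n + 1), typeCount τ p t ≠ 0 ↔ t ∈ I

/-- Two distinct vertices connected by a simple path are neighbors. -/
def Neighbors (a b : V) : Prop :=
  a ≠ b ∧ ((∃ p : Quiver.Path a b, SimplePath τ p) ∨ (∃ p : Quiver.Path b a, SimplePath τ p))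

/-- A polygon is a nonempty finite set of pairwise neighboring vertices. -/
def IsPolygon (Δ : Finset V) : Prop :=
  Δ.Nonempty ∧ ∀ u ∈ Δ, ∀ v ∈ Δ, u ≠ v → Neighbors τ u v

/-- The hull of a set of vertices. -/
def hull (H : Set V) : Set V :=
  {v | ∀ t : Fin (n + 1), ∃ z ∈ H, ∃ p : Quiver.Path z v, typeCount τ p t = 0}

/-- `w` is the shadow of `v` in `H`: `w ∈ H` and each `z ∈ H` is connected to `v`
by an admissible path through `w`. -/
def IsShadow (H : Set V) (v w : V) : Prop :=
  w ∈ H ∧ ∀ z ∈ H, ∃ (p : Quiver.Path z w) (q : Quiver.Path w v), Admissible τ (p.comp q)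

/-- `v` is a bridge of `v₁` and `v₂`: there are simple admissible paths from `v`
to `v₁` and to `v₂` with no arrow type in common. -/
def IsBridge (v₁ v₂ v : V) : Prop :=
  ∃ (γ₁ : Quiver.Path v v₁) (γ₂ : Quiver.Path v v₂),
    SimplePath τ γ₁ ∧ Admissible τ γ₁ ∧ SimplePath τ γ₂ ∧ Admissible τ γ₂ ∧
      NoCommonType τ γ₁ γ₂

/-- Two distinct vertices are weakly neighbors if they admit a bridge. -/
def WeaklyNeighbors (v₁ v₂ : V) : Prop :=
  v₁ ≠ v₂ ∧ ∃ v : V, IsBridge τ v₁ v₂ v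

/-- Composition of a chain of paths. -/
def chainComp (v : ℕ → V) (α : ∀ i : ℕ, Quiver.Path (v i) (v (i + 1))) :
    ∀ m : ℕ, Quiver.Path (v 0) (v m)
  | 0 => Quiver.Path.nil
  | (m + 1) => (chainComp v α m).comp (α m)

end QuiverDefs

section AbelianDefs

variable {k : Type*} [Field k]
variable {V : Type*} [Quiver.{w+1} V] {n : ℕ}
variable {C : Type*} [Category C] [Abelian C] [Linear k C]

/-- The composition of the morphisms of `F` along a path. -/
def mapAlong (F : Prefunctor V C) : ∀ {a b : V}, Quiver.Path a b → (F.obj a ⟶ F.obj b)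
  | _, _, Quiver.Path.nil => 𝟙 _
  | _, _, Quiver.Path.cons p e => mapAlong F p ≫ F.map e

variable (k) (τ : ∀ {a b : V}, (a ⟶ b) → Fin (n + 1))

/-- A weakly linked net: maps along two paths with the same endpoints, the second
admissible, agree up to a scalar, and maps along minimal circuits vanish. -/
structure IsWeaklyLinkedNet (F : Prefunctor V C) : Prop where
  scalar : ∀ {a b : V} (γ₁ γ₂ : Quiver.Path a b), Admissible τ γ₂ →
    ∃ c : k, mapAlong F γ₁ = c • mapAlong F γ₂
  circuit : ∀ {a b : V} (γ : Quiver.Path a b), SimplePath τ γ → ¬ Admissible τ γ →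
    mapAlong F γ = 0

/-- A linked net: a weakly linked net such that two admissible paths leaving the
same vertex with no arrow type in common have trivially intersecting kernels. -/
def IsLinkedNet (F : Prefunctor V C) : Prop :=
  IsWeaklyLinkedNet k τ F ∧
    ∀ {a b c : V} (γ₁ : Quiver.Path a b) (γ₂ : Quiver.Path a c),
      Admissible τ γ₁ → Admissible τ γ₂ → NoCommonType τ γ₁ γ₂ →
      ∀ {T : C} (h : T ⟶ F.obj a),
        h ≫ mapAlong F γ₁ = 0 → h ≫ mapAlong F γ₂ = 0 → h = 0

variable {k}

/-- The class `φ^u_v` is zero. -/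
def PhiZero (F : Prefunctor V C) (u v : V) : Prop :=
  ∀ p : Quiver.Path u v, Admissible τ p → mapAlong F p = 0

/-- Two vertices are unrelated for the net if the classes `φ^u_v` and `φ^v_u` vanish. -/
def Unrelated (F : Prefunctor V C) (u v : V) : Prop :=
  PhiZero τ F u v ∧ PhiZero τ F v u

/-- The net is 1-generated by `H`. -/
def OneGenBy (F : Prefunctor V C) (H : Set V) : Prop :=
  ∀ v : V, ∃ u ∈ H, ∃ p : Quiver.Path u v, Epi (mapAlong F p)

/-- The net is generated by `H`. -/
def GeneratedBy (F : Prefunctor V C) (H : Set V) : Prop :=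
  ∀ v : V, ∃ s : Finset ((u : V) × Quiver.Path u v),
    (∀ x ∈ s, x.1 ∈ H) ∧ s.sup (fun x => imageSubobject (mapAlong F x.2)) = ⊤

/-- The net is finitely generated. -/
def FinitelyGenerated (F : Prefunctor V C) : Prop :=
  ∃ H : Set V, H.Finite ∧ GeneratedBy F H

/-- All objects of the net are simple objects. -/
def AllSimple (F : Prefunctor V C) : Prop := ∀ v : V, Simple (F.obj v)

/-- The net is locally finite. -/
def LocallyFinite (F : Prefunctor V C) : Prop :=
  ∀ v : V, ∃ ℓ : ℕ, ∀ (u : V) (p : Quiver.Path u v), ℓ < p.length → mapAlong F p = 0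

/-- The net is pure: every epimorphism between associated objects is an isomorphism. -/
def PureRep (F : Prefunctor V C) : Prop :=
  ∀ (u v : V) (f : F.obj u ⟶ F.obj v), Epi f → IsIso f

/-- The net is exact: `Im φ^{v₁}_{v₂} = Ker φ^{v₂}_{v₁}` for all neighbors. -/
def ExactRep (F : Prefunctor V C) : Prop :=
  ∀ u v : V, Neighbors τ u v → ∀ (p : Quiver.Path u v) (q : Quiver.Path v u),
    Admissible τ p → Admissible τ q →
      imageSubobject (mapAlong F p) = kernelSubobject (mapAlong F q)

/-- The representation `𝔳_H` assembled from a shadow function `sh` and maps `Gmap`. -/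
def shadowPrefunctor (F : Prefunctor V C) (sh : V → V)
    (Gmap : ∀ {a b : V}, (a ⟶ b) → (F.obj (sh a) ⟶ F.obj (sh b))) : Prefunctor V C where
  obj v := F.obj (sh v)
  map e := Gmap e

variable (k)

/-- `(sh, Gmap)` is the data of an `H`-shadow representation of `F`. -/
def IsShadowRep (H : Set V) (F : Prefunctor V C) (sh : V → V)
    (Gmap : ∀ {a b : V}, (a ⟶ b) → (F.obj (sh a) ⟶ F.obj (sh b))) : Prop :=
  (∀ v : V, IsShadow τ H v (sh v)) ∧
    ∀ {a b : V} (e : a ⟶ b),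
      ((¬ ∃ (p : Quiver.Path (sh a) a) (q : Quiver.Path a b), Admissible τ (p.comp q)) →
        Gmap e = 0) ∧
      ((∃ (p : Quiver.Path (sh a) a) (q : Quiver.Path a b), Admissible τ (p.comp q)) →
        ∃ (c : k) (ρ : Quiver.Path (sh a) (sh b)), c ≠ 0 ∧ Admissible τ ρ ∧
          Gmap e = c • mapAlong F ρ)

end AbelianDefs

section VectorDefs

variable {k : Type*} [Field k]
variable {V : Type*} [Quiver.{w+1} V] {n : ℕ}
variable {W : V → Type*} [∀ v, AddCommGroup (W v)] [∀ v, Module k (W v)]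

/-- The composition of the linear maps of the representation along a path. -/
def mapAlongL (φ : ∀ {a b : V}, (a ⟶ b) → (W a →ₗ[k] W b)) :
    ∀ {a b : V}, Quiver.Path a b → (W a →ₗ[k] W b)
  | _, _, Quiver.Path.nil => LinearMap.id
  | _, _, Quiver.Path.cons p e => (φ e).comp (mapAlongL φ p)

variable (k) (τ : ∀ {a b : V}, (a ⟶ b) → Fin (n + 1))
variable (φ : ∀ {a b : V}, (a ⟶ b) → (W a →ₗ[k] W b))

/-- A weakly linked net of vector spaces. -/
structure IsWeaklyLinkedNetL : Prop where
  scalar : ∀ {a b : V} (γ₁ γ₂ : Quiver.Path a b), Admissible τ γ₂ →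
    ∃ c : k, mapAlongL φ γ₁ = c • mapAlongL φ γ₂
  circuit : ∀ {a b : V} (γ : Quiver.Path a b), SimplePath τ γ → ¬ Admissible τ γ →
    mapAlongL φ γ = 0

/-- A linked net of vector spaces. -/
def IsLinkedNetL : Prop :=
  IsWeaklyLinkedNetL k τ φ ∧
    ∀ {a b c : V} (γ₁ : Quiver.Path a b) (γ₂ : Quiver.Path a c),
      Admissible τ γ₁ → Admissible τ γ₂ → NoCommonType τ γ₁ γ₂ →
      LinearMap.ker (mapAlongL φ γ₁) ⊓ LinearMap.ker (mapAlongL φ γ₂) = ⊥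

/-- All spaces are nonzero of the same finite dimension. -/
def PureNontrivialL : Prop :=
  (∀ v : V, 0 < Module.finrank k (W v)) ∧
    ∀ u v : V, Module.finrank k (W u) = Module.finrank k (W v)

/-- The net of vector spaces is 1-generated by `H`. -/
def OneGenL (H : Set V) : Prop :=
  ∀ v : V, ∃ u ∈ H, ∃ p : Quiver.Path u v, Function.Surjective (mapAlongL φ p)

/-- The net of vector spaces is generated by `H`. -/
def GeneratedL (H : Set V) : Prop :=
  ∀ v : V, ∃ s : Finset ((u : V) × Quiver.Path u v),
    (∀ x ∈ s, x.1 ∈ H) ∧ (⨆ x ∈ s, LinearMap.range (mapAlongL φ x.2)) = ⊤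

/-- The net of vector spaces is finitely generated. -/
def FinGenL : Prop := ∃ H : Set V, H.Finite ∧ GeneratedL k φ H

/-- A subrepresentation of pure dimension one: a point of `LP(𝔳)`. -/
def IsLP (L : ∀ v : V, Submodule k (W v)) : Prop :=
  (∀ v : V, Module.finrank k (L v) = 1) ∧
    ∀ (a b : V) (e : a ⟶ b), (L a).map (φ e) ≤ L b

/-- A point of `LP_H(𝔳)`: a tuple of one-dimensional subspaces indexed by `H` such
that the image of the subspace at `v` along any admissible path from `v` to `u`
is contained in the subspace at `u`, for all `v, u ∈ H`. -/
def IsLPH (H : Set V) (M : (v : V) → v ∈ H → Submodule k (W v)) : Prop :=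
  (∀ (v : V) (hv : v ∈ H), Module.finrank k (M v hv) = 1) ∧
    ∀ (v : V) (hv : v ∈ H) (u : V) (hu : u ∈ H) (p : Quiver.Path v u),
      Admissible τ p → (M v hv).map (mapAlongL φ p) ≤ M u hu

/-- The family `L` is generated by the vertex `v₀`. -/
def GenByVertexL (v₀ : V) (L : ∀ v : V, Submodule k (W v)) : Prop :=
  ∀ u : V, L u = ⨆ p : Quiver.Path v₀ u, (L v₀).map (mapAlongL φ p)

/-- The net of vector spaces is exact. -/
def ExactL : Prop :=
  ∀ u v : V, Neighbors τ u v → ∀ (p : Quiver.Path u v) (q : Quiver.Path v u),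
    Admissible τ p → Admissible τ q →
      LinearMap.range (mapAlongL φ p) = LinearMap.ker (mapAlongL φ q)

end VectorDefs

section AuxProofs

variable {V : Type*} [Quiver.{w+1} V] {n : ℕ}
variable (τ : ∀ {a b : V}, (a ⟶ b) → Fin (n + 1))

lemma typeCount_nil (a : V) (t : Fin (n + 1)) :
    typeCount τ (Quiver.Path.nil : Quiver.Path a a) t = 0 := by simp [typeCount]

lemma typeCount_comp {a b c : V} (p : Quiver.Path a b) (q : Quiver.Path b c) (t : Fin (n + 1)) :
    typeCount τ (p.comp q) t = typeCount τ p t + typeCount τ q t := by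
  induction q with
  | nil => simp [typeCount]
  | cons q e ih => simp [typeCount, ih]; omega

lemma nil_simple (a : V) : SimplePath τ (Quiver.Path.nil : Quiver.Path a a) :=
  fun _ => by simp [typeCount]

lemma nil_adm (a : V) : Admissible τ (Quiver.Path.nil : Quiver.Path a a) :=
  ⟨0, by simp [typeCount]⟩

lemma exists_path_of_finset (hZ : IsZnQuiver τ) (a : V) (S : Finset (Fin (n + 1))) :
    ∃ (b : V) (p : Quiver.Path a b),
      ∀ t, typeCount τ p t = if t ∈ S then 1 else 0 := by
  classical
  induction S using Finset.induction_on with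
  | empty => exact ⟨a, Quiver.Path.nil, fun t => by simp [typeCount]⟩
  | @insert t S htS ih =>
    obtain ⟨b, p, hp⟩ := ih
    obtain ⟨⟨c, e⟩, he, -⟩ := hZ.uniqArrow b t
    refine ⟨c, p.cons e, fun s => ?_⟩
    simp only [typeCount, hp s, he, Finset.mem_insert]
    by_cases h1 : s = t
    · subst h1; simp [htS]
    · simp [h1, Ne.symm h1]

lemma adm_of_simple_ne (hZ : IsZnQuiver τ) {a b : V} (hne : a ≠ b)
    (p : Quiver.Path a b) (hs : SimplePath τ p) : Admissible τ p := by
  by_contra h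
  simp only [Admissible, not_exists] at h
  refine hne ((hZ.targetEq p (Quiver.Path.nil : Quiver.Path a a)).mpr ⟨1, fun t => ?_⟩).symm
  have h1 : typeCount τ p t ≤ 1 := hs t
  have h2 : typeCount τ p t ≠ 0 := h t
  have h3 : typeCount τ p t = 1 := by omega
  simp [h3, typeCount_nil]

lemma exists_reverse (hZ : IsZnQuiver τ) {a b : V} (hne : a ≠ b)
    (p : Quiver.Path a b) (hs : SimplePath τ p) :
    ∃ q : Quiver.Path b a, SimplePath τ q ∧ Admissible τ q := by
  classical
  set S : Finset (Fin (n + 1)) :=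
    Finset.univ.filter (fun t => typeCount τ p t ≠ 0) with hS
  have hp1 : ∀ t, typeCount τ p t = if t ∈ S then 1 else 0 := fun t => by
    have h1 : typeCount τ p t ≤ 1 := hs t
    simp only [hS, Finset.mem_filter, Finset.mem_univ, true_and]
    split_ifs with h <;> omega
  have hSne : S.Nonempty := by
    by_contra h
    rw [Finset.not_nonempty_iff_eq_empty] at h
    refine hne ((hZ.targetEq p (Quiver.Path.nil : Quiver.Path a a)).mpr ⟨0, fun t => ?_⟩).symm
    simp [hp1 t, h, typeCount_nil]
  obtain ⟨c, q, hq⟩ := exists_path_of_finset τ hZ b Sᶜ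
  have hca : c = a := by
    refine (hZ.targetEq (p.comp q) (Quiver.Path.nil : Quiver.Path a a)).mpr
      ⟨1, fun t => ?_⟩
    rw [typeCount_comp, hp1 t, hq t, typeCount_nil]
    by_cases h : t ∈ S <;> simp [h]
  subst hca
  obtain ⟨t₀, ht₀⟩ := hSne
  refine ⟨q, fun t => by rw [hq t]; split_ifs <;> omega, ⟨t₀, by simp [hq t₀, ht₀]⟩⟩

lemma neighbors_path (hZ : IsZnQuiver τ) {v₁ v₂ : V} (h : Neighbors τ v₁ v₂) :
    ∃ p : Quiver.Path v₁ v₂, SimplePath τ p ∧ Admissible τ p := by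
  obtain ⟨hne, ⟨p, hs⟩ | ⟨p, hs⟩⟩ := h
  · exact ⟨p, hs, adm_of_simple_ne τ hZ hne p hs⟩
  · obtain ⟨q, hqs, hqa⟩ := exists_reverse τ hZ hne.symm p hs
    exact ⟨q, hqs, hqa⟩

lemma bridge_left {v₁ v₂ : V} (p : Quiver.Path v₁ v₂) (hs : SimplePath τ p)
    (ha : Admissible τ p) : IsBridge τ v₁ v₂ v₁ :=
  ⟨Quiver.Path.nil, p, nil_simple τ v₁, nil_adm τ v₁, hs, ha,
    fun t h => h.1 (typeCount_nil τ v₁ t)⟩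

lemma bridge_right (hZ : IsZnQuiver τ) {v₁ v₂ : V} (h : Neighbors τ v₁ v₂) :
    IsBridge τ v₁ v₂ v₂ := by
  obtain ⟨p, hps, hpa⟩ := neighbors_path τ hZ h
  obtain ⟨q, hqs, hqa⟩ := exists_reverse τ hZ h.1 p hps
  exact ⟨q, Quiver.Path.nil, hqs, hqa, nil_simple τ v₂, nil_adm τ v₂,
    fun t h => h.2 (typeCount_nil τ v₂ t)⟩

lemma bridge_eq (hZ : IsZnQuiver τ) {v₁ v₂ : V} (p : Quiver.Path v₁ v₂)
    (hs : SimplePath τ p) (v : V) (hb : IsBridge τ v₁ v₂ v) : v = v₁ ∨ v = v₂ := by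
  obtain ⟨γ₁, γ₂, hs1, ha1, hs2, ha2, hnc⟩ := hb
  by_cases h1 : ∀ t, typeCount τ γ₁ t = 0
  · exact Or.inl ((hZ.targetEq γ₁ (Quiver.Path.nil : Quiver.Path v v)).mpr
      ⟨0, fun t => by simp [h1 t, typeCount_nil]⟩).symm
  by_cases h2 : ∀ t, typeCount τ γ₂ t = 0
  · exact Or.inr ((hZ.targetEq γ₂ (Quiver.Path.nil : Quiver.Path v v)).mpr
      ⟨0, fun t => by simp [h2 t, typeCount_nil]⟩).symm
  exfalso
  push_neg at h1 h2
  obtain ⟨t₁, ht₁⟩ := h1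
  obtain ⟨t₂, ht₂⟩ := h2
  obtain ⟨d, hd⟩ := (hZ.targetEq (γ₁.comp p) γ₂).mp rfl
  have e1 : (typeCount τ (γ₁.comp p) t₁ : ℤ) - (typeCount τ γ₂ t₁ : ℤ) = d := hd t₁
  have e2 : (typeCount τ (γ₁.comp p) t₂ : ℤ) - (typeCount τ γ₂ t₂ : ℤ) = d := hd t₂
  have ht₁' : typeCount τ γ₁ t₁ ≠ 0 := ht₁
  have ht₂' : typeCount τ γ₂ t₂ ≠ 0 := ht₂
  have c1 : typeCount τ γ₂ t₁ = 0 := by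
    by_contra h
    exact hnc t₁ ⟨ht₁, h⟩
  have c2 : typeCount τ γ₁ t₂ = 0 := by
    by_contra h
    exact hnc t₂ ⟨h, ht₂⟩
  rw [typeCount_comp] at e1 e2
  have b1 : typeCount τ p t₁ ≤ 1 := hs t₁
  have b2 : typeCount τ p t₂ ≤ 1 := hs t₂
  have b3 : typeCount τ γ₁ t₁ ≤ 1 := hs1 t₁
  have b4 : typeCount τ γ₂ t₂ ≤ 1 := hs2 t₂
  omega

end AuxProofs

/-- In a `ℤⁿ`-quiver `Q`, any two neighbors `v₁` and `v₂` are
weakly neighbors, and the only bridges of `v₁` and `v₂` are `v₁` and `v₂`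
themselves. In particular, the set of bridges of all pairs of distinct vertices
of a polygon (with at least two vertices) is the polygon itself. -/
theorem statement_13
    {V : Type*} [Quiver.{w+1} V] {n : ℕ}
    (τ : ∀ {a b : V}, (a ⟶ b) → Fin (n + 1)) (hZ : IsZnQuiver τ) :
    (∀ v₁ v₂ : V, Neighbors τ v₁ v₂ →
      WeaklyNeighbors τ v₁ v₂ ∧ IsBridge τ v₁ v₂ v₁ ∧ IsBridge τ v₁ v₂ v₂ ∧
        ∀ v : V, IsBridge τ v₁ v₂ v → v = v₁ ∨ v = v₂) ∧
    (∀ Δ : Finset V, IsPolygon τ Δ → 2 ≤ Δ.card →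
      {v : V | ∃ u ∈ Δ, ∃ u' ∈ Δ, u ≠ u' ∧ IsBridge τ u u' v} = ↑Δ) := by
  have main : ∀ v₁ v₂ : V, Neighbors τ v₁ v₂ →
      WeaklyNeighbors τ v₁ v₂ ∧ IsBridge τ v₁ v₂ v₁ ∧ IsBridge τ v₁ v₂ v₂ ∧
        ∀ v : V, IsBridge τ v₁ v₂ v → v = v₁ ∨ v = v₂ := by
    intro v₁ v₂ h
    obtain ⟨p, hps, hpa⟩ := neighbors_path τ hZ h
    exact ⟨⟨h.1, v₁, bridge_left τ p hps hpa⟩, bridge_left τ p hps hpa,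
      bridge_right τ hZ h, fun v hv => bridge_eq τ hZ p hps v hv⟩
  refine ⟨main, fun Δ hΔ hcard => ?_⟩
  ext v
  simp only [Set.mem_setOf_eq, Finset.mem_coe]
  constructor
  · rintro ⟨u, hu, u', hu', hne, hb⟩
    rcases (main u u' (hΔ.2 u hu u' hu' hne)).2.2.2 v hb with h | h
    · exact h ▸ hu
    · exact h ▸ hu'
  · intro hv
    obtain ⟨u', hu', hne⟩ := Finset.exists_mem_ne
      (show 1 < Δ.card by omega) v
    have hnb := hΔ.2 v hv u' hu' (Ne.symm hne)
    obtain ⟨p, hps, hpa⟩ := neighbors_path τ hZ hnb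
    exact ⟨v, hv, u', hu', Ne.symm hne, bridge_left τ p hps hpa⟩

end LNet
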